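/- Let β > 0, α ≥ 0 and let J be a symmetric random variable with |J| ≤ 1 a.s. If a symmetric real random variable g satisfies the distributional fixed-point equation g =_d Σ_{ℓ=1}^{ξ_{2α}} (1/β)·arctanh(tanh(βJ_ℓ)·tanh(βg_ℓ)), then E[g²] ≤ 2α. -/

import Mathlib

/-!
Write `u(j, h) = cavityBias β j h = β⁻¹ artanh (tanh (β j) tanh (β h))`. Since `artanh` is
increasing and `|tanh (β j) tanh (β h)| ≤ |tanh (β j)|`, we get `|u(j, h)| ≤ |j|`, so every
summand `u(J_ℓ, g_ℓ)` is bounded by `1`; it is centred because `u` is odd in `j`, `J_ℓ` is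
symmetric and independent of `g_ℓ`. The summands are pairwise independent, so a sum of `k` of
them has second moment at most `k`, and since the Poisson count `ξ` is independent of the
summands, `E[g²] ≤ E[ξ] = 2α`.
-/

noncomputable section

open MeasureTheory ProbabilityTheory

/-- The inverse hyperbolic tangent. -/
def artanh (x : ℝ) : ℝ := (1 / 2) * Real.log ((1 + x) / (1 - x))

/-- Index type for the random variables entering the replica symmetric
fixed-point equation: the Poisson counter, the couplings and the effective fields. -/
inductive FPIdx : Type
  | count : FPIdx
  | coupling (ℓ : ℕ) : FPIdx
  | field (ℓ : ℕ) : FPIdx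

/-- Value type of each variable. -/
def FPIdxType : FPIdx → Type
  | .count => ℕ
  | .coupling _ => ℝ
  | .field _ => ℝ

/-- Measurable space structure on the value types. -/
def FPIdxMS : ∀ idx : FPIdx, MeasurableSpace (FPIdxType idx)
  | .count => inferInstanceAs (MeasurableSpace ℕ)
  | .coupling _ => inferInstanceAs (MeasurableSpace ℝ)
  | .field _ => inferInstanceAs (MeasurableSpace ℝ)

/-- The full family of variables, seen as one dependent family. -/
def fpFam {Ω : Type} (ξ : Ω → ℕ) (Jv gv : ℕ → Ω → ℝ) :
    ∀ idx : FPIdx, Ω → FPIdxType idx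
  | .count => ξ
  | .coupling ℓ => Jv ℓ
  | .field ℓ => gv ℓ

lemma artanh_eq_real_artanh {x : ℝ} (hx : x ∈ Set.Icc (-1) 1) : artanh x = Real.artanh x :=
  (Real.artanh_eq_half_log hx).symm

lemma artanh_neg (x : ℝ) : artanh (-x) = -artanh x := by
  rw [artanh, artanh, show (1 + -x) / (1 - -x) = ((1 + x) / (1 - x))⁻¹ by rw [inv_div]; ring,
    Real.log_inv]
  ring

@[fun_prop]
lemma Real.measurable_tanh : Measurable Real.tanh := by
  rw [show Real.tanh = fun x => Real.sinh x / Real.cosh x from funext Real.tanh_eq_sinh_div_cosh]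
  fun_prop

@[fun_prop]
lemma measurable_artanh : Measurable artanh := by
  unfold artanh; fun_prop

lemma abs_artanh_le_of_abs_le_abs_tanh {p x : ℝ} (hp : |p| ≤ |Real.tanh x|) :
    |artanh p| ≤ |x| := by
  have key : ∀ q, |q| ≤ |Real.tanh x| → artanh q ≤ |x| := by
    intro q hq
    have hq1 : -1 < q := by
      linarith [neg_abs_le q, Real.abs_tanh_lt_one x]
    have hmono : ∀ y, q ≤ Real.tanh y → artanh q ≤ y := fun y hy => by
      rw [artanh_eq_real_artanh ⟨hq1.le, hy.trans (Real.tanh_lt_one y).le⟩,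
        ← Real.artanh_tanh y]
      exact Real.artanh_le_artanh hq1 (Real.tanh_lt_one y) hy
    rcases abs_choice (Real.tanh x) with h | h
    · exact (hmono x (h ▸ (le_abs_self q).trans hq)).trans (le_abs_self x)
    · rw [← Real.tanh_neg] at h
      exact (hmono (-x) (h ▸ (le_abs_self q).trans hq)).trans (neg_le_abs x)
  have hneg := key (-p) (by rwa [abs_neg])
  rw [artanh_neg] at hneg
  exact abs_le.2 ⟨by linarith, key p hp⟩

def cavityBias (β j h : ℝ) : ℝ := β⁻¹ * artanh (Real.tanh (β * j) * Real.tanh (β * h))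

@[fun_prop]
lemma measurable_cavityBias (β : ℝ) : Measurable (Function.uncurry (cavityBias β)) := by
  unfold cavityBias
  fun_prop

lemma cavityBias_neg_left (β j h : ℝ) : cavityBias β (-j) h = -cavityBias β j h := by
  rw [cavityBias, cavityBias, mul_neg, Real.tanh_neg, neg_mul, artanh_neg, mul_neg]

lemma abs_cavityBias_le (β j h : ℝ) : |cavityBias β j h| ≤ |j| := by
  have hprod : |Real.tanh (β * j) * Real.tanh (β * h)| ≤ |Real.tanh (β * j)| := by
    rw [abs_mul]
    exact mul_le_of_le_one_right (abs_nonneg _) (Real.abs_tanh_lt_one _).le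
  calc |cavityBias β j h| ≤ |β|⁻¹ * |β * j| := by
        rw [cavityBias, abs_mul, abs_inv]
        exact mul_le_mul_of_nonneg_left (abs_artanh_le_of_abs_le_abs_tanh hprod) (by positivity)
    _ ≤ |j| := by
        rw [abs_mul, ← mul_assoc]
        exact mul_le_of_le_one_left (abs_nonneg j) (inv_mul_le_one_of_le₀ le_rfl (abs_nonneg β))

section Probability

variable {Ω : Type*} {mΩ : MeasurableSpace Ω} {μ : Measure Ω}

lemma ProbabilityTheory.iIndepFun.indepFun_of_measurable_iSup {ι : Type*} {κ : ι → Type*}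
    {m : ∀ i, MeasurableSpace (κ i)} {f : ∀ i, Ω → κ i} (hf : iIndepFun f μ)
    (hmeas : ∀ i, Measurable (f i)) {S T : Set ι} (hST : Disjoint S T)
    {β γ : Type*} [MeasurableSpace β] [MeasurableSpace γ] {Y : Ω → β} {Z : Ω → γ}
    (hY : Measurable[⨆ i ∈ S, (m i).comap (f i)] Y)
    (hZ : Measurable[⨆ i ∈ T, (m i).comap (f i)] Z) : IndepFun Y Z μ :=
  (IndepFun_iff_Indep _ _ _).2 <| indep_of_indep_of_le_left
    (indep_of_indep_of_le_right
      (indep_iSup_of_disjoint (fun i => (hmeas i).comap_le) hf.iIndep hST) hZ.comap_le)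
    hY.comap_le

lemma integral_eq_zero_of_indepFun_of_odd [IsFiniteMeasure μ] {β : Type*} [MeasurableSpace β]
    {X : Ω → ℝ} {Y : Ω → β} (hX : Measurable X) (hY : Measurable Y) (hXY : IndepFun X Y μ)
    (hsymm : (μ.map X).map (fun x => -x) = μ.map X) {F : ℝ → β → ℝ}
    (hF : Measurable (Function.uncurry F)) (hodd : ∀ x y, F (-x) y = -F x y) :
    ∫ ω, F (X ω) (Y ω) ∂μ = 0 := by
  set ν := (μ.map X).prod (μ.map Y)
  have hlaw : μ.map (fun ω => (X ω, Y ω)) = ν :=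
    (indepFun_iff_map_prod_eq_prod_map_map hX.aemeasurable hY.aemeasurable).1 hXY
  have hflip : ν.map (Prod.map (fun x => -x) id) = ν := by
    rw [← Measure.map_prod_map _ _ measurable_neg measurable_id, hsymm, Measure.map_id]
  have hanti : ∫ p, Function.uncurry F p ∂ν = -∫ p, Function.uncurry F p ∂ν := by
    conv_lhs => rw [← hflip]
    rw [integral_map (measurable_neg.prodMap measurable_id).aemeasurable
      hF.aestronglyMeasurable, ← integral_neg]
    congr 1 with ⟨x, y⟩
    exact hodd x y
  have hint : ∫ ω, F (X ω) (Y ω) ∂μ = ∫ p, Function.uncurry F p ∂ν := by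
    rw [← hlaw, integral_map (hX.prodMk hY).aemeasurable hF.aestronglyMeasurable]
    rfl
  linarith

lemma lintegral_sq_sum_le_card [IsProbabilityMeasure μ] {ι : Type*} {X : ι → Ω → ℝ}
    {s : Finset ι} (hX : ∀ i, Measurable (X i)) (hbdd : ∀ i ∈ s, ∀ᵐ ω ∂μ, |X i ω| ≤ 1)
    (hmean : ∀ i ∈ s, ∫ ω, X i ω ∂μ = 0)
    (hindep : Set.Pairwise s fun i j => IndepFun (X i) (X j) μ) :
    ∫⁻ ω, ENNReal.ofReal ((∑ i ∈ s, X i ω) ^ 2) ∂μ ≤ s.card := by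
  have hL2 : ∀ i ∈ s, MemLp (X i) 2 μ := fun i hi =>
    MemLp.of_bound (hX i).aestronglyMeasurable 1 (by simpa using hbdd i hi)
  have hvar_le : ∀ i ∈ s, variance (X i) μ ≤ 1 := fun i hi => by
    simpa using variance_le_sq_of_bounded (a := -1) (b := 1)
      (by filter_upwards [hbdd i hi] with ω h using abs_le.1 h) (hX i).aemeasurable
  have hsum_mean : ∫ ω, ∑ i ∈ s, X i ω ∂μ = 0 := by
    rw [integral_finsetSum s fun i hi => (hL2 i hi).integrable one_le_two]
    exact Finset.sum_eq_zero hmean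
  have hsum_fun : (fun ω => ∑ i ∈ s, X i ω) = ∑ i ∈ s, X i :=
    funext fun ω => (Finset.sum_apply ω s X).symm
  have hsum_sq : ∫ ω, (∑ i ∈ s, X i ω) ^ 2 ∂μ ≤ s.card :=
    calc ∫ ω, (∑ i ∈ s, X i ω) ^ 2 ∂μ = variance (fun ω => ∑ i ∈ s, X i ω) μ :=
          (variance_of_integral_eq_zero (Finset.measurable_sum s fun i _ => hX i).aemeasurable
            hsum_mean).symm
      _ = ∑ i ∈ s, variance (X i) μ := by rw [hsum_fun]; exact IndepFun.variance_sum hL2 hindep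
      _ ≤ s.card := by simpa using Finset.sum_le_sum hvar_le
  rw [← ofReal_integral_eq_lintegral_ofReal (memLp_finsetSum s hL2).integrable_sq
    (ae_of_all _ fun ω => sq_nonneg _)]
  simpa using ENNReal.ofReal_le_ofReal hsum_sq

lemma measurable_eval_index {β : Type*} [MeasurableSpace β] {N : Ω → ℕ} (hN : Measurable N)
    {Y : ℕ → Ω → β} (hY : ∀ k, Measurable (Y k)) : Measurable fun ω => Y (N ω) ω :=
  (measurable_from_prod_countable_left (f := fun p : Ω × ℕ => Y p.2 p.1) hY).comp
    (measurable_id.prodMk hN)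

lemma lintegral_eval_index_eq_tsum {N : Ω → ℕ} (hN : Measurable N) {Y : ℕ → Ω → ENNReal}
    (hY : ∀ k, Measurable (Y k)) (hind : ∀ k, IndepFun N (Y k) μ) :
    ∫⁻ ω, Y (N ω) ω ∂μ = ∑' k, μ (N ⁻¹' {k}) * ∫⁻ ω, Y k ω ∂μ := by
  have hind_meas : ∀ k, Measurable fun n : ℕ => ({k} : Set ℕ).indicator (1 : ℕ → ENNReal) n :=
    fun k => measurable_one.indicator (measurableSet_singleton k)
  have hsplit : ∀ ω, Y (N ω) ω = ∑' k, ({k} : Set ℕ).indicator 1 (N ω) * Y k ω := fun ω => by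
    rw [tsum_eq_single (N ω) fun k hk => by simp [Ne.symm hk]]
    simp
  calc ∫⁻ ω, Y (N ω) ω ∂μ = ∑' k, ∫⁻ ω, ({k} : Set ℕ).indicator 1 (N ω) * Y k ω ∂μ := by
        rw [lintegral_congr hsplit]
        exact lintegral_tsum fun k => ((hind_meas k).comp hN).aemeasurable.mul (hY k).aemeasurable
    _ = ∑' k, μ (N ⁻¹' {k}) * ∫⁻ ω, Y k ω ∂μ := by
        congr 1 with k
        rw [← lintegral_indicator_one (hN (measurableSet_singleton k))]
        exact lintegral_mul_eq_lintegral_mul_lintegral_of_indepFun''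
          ((hind_meas k).comp hN).aemeasurable (hY k).aemeasurable
          ((hind k).comp (hind_meas k) measurable_id)

end Probability

lemma hasSum_nat_mul_poisson (r : ℝ) :
    HasSum (fun n : ℕ => n * (Real.exp (-r) * r ^ n / n.factorial)) r := by
  have hexp : HasSum (fun n : ℕ => r ^ n / n.factorial) (Real.exp r) := by
    simpa [Real.exp_eq_exp_ℝ] using NormedSpace.expSeries_div_hasSum_exp r
  have hshift : ∀ n : ℕ, ((n + 1 : ℕ) : ℝ) * (Real.exp (-r) * r ^ (n + 1) / (n + 1).factorial)
      = r * Real.exp (-r) * (r ^ n / n.factorial) := fun n => by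
    rw [Nat.factorial_succ]
    push_cast
    field_simp
    ring
  have h := hexp.mul_left (r * Real.exp (-r))
  simp_rw [← hshift, mul_assoc, ← Real.exp_add, neg_add_cancel, Real.exp_zero, mul_one] at h
  rw [← hasSum_nat_add_iff' 1]
  simpa using h

lemma tsum_poisson_mul_le {r : ℝ} (hr : 0 ≤ r) {c : ℕ → ENNReal} (hc : ∀ k, c k ≤ k) :
    ∑' k, ENNReal.ofReal (Real.exp (-r) * r ^ k / k.factorial) * c k ≤ ENNReal.ofReal r := by
  have hmean := hasSum_nat_mul_poisson r
  calc ∑' k, ENNReal.ofReal (Real.exp (-r) * r ^ k / k.factorial) * c k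
      ≤ ∑' k : ℕ, ENNReal.ofReal (Real.exp (-r) * r ^ k / k.factorial) * k :=
        ENNReal.tsum_le_tsum fun k => by gcongr; exact hc k
    _ = ∑' k : ℕ, ENNReal.ofReal (k * (Real.exp (-r) * r ^ k / k.factorial)) := by
        congr 1 with k
        rw [ENNReal.ofReal_mul (by positivity), ENNReal.ofReal_natCast, mul_comm]
    _ = ENNReal.ofReal r := by
        rw [← ENNReal.ofReal_tsum_of_nonneg (fun k => by positivity) hmean.summable,
          hmean.tsum_eq]

section FixedPointFamily

attribute [local instance] FPIdxMS

variable {Ω : Type} {ξ : Ω → ℕ} {Jv gv : ℕ → Ω → ℝ}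

lemma measurable_iSup_comap_fpFam {S : Set FPIdx} {ℓ : ℕ} (hJ : FPIdx.coupling ℓ ∈ S)
    (hg : FPIdx.field ℓ ∈ S) {f : ℝ → ℝ → ℝ} (hf : Measurable (Function.uncurry f)) :
    Measurable[⨆ i ∈ S, (FPIdxMS i).comap (fpFam ξ Jv gv i)] fun ω => f (Jv ℓ ω) (gv ℓ ω) := by
  have hcomp : ∀ i ∈ S, Measurable[⨆ i ∈ S, (FPIdxMS i).comap (fpFam ξ Jv gv i), FPIdxMS i]
      (fpFam ξ Jv gv i) := fun i hi =>
    Measurable.of_comap_le (le_iSup₂ (f := fun i _ => (FPIdxMS i).comap (fpFam ξ Jv gv i)) i hi)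
  exact hf.comp ((hcomp _ hJ).prodMk (hcomp _ hg))

variable [MeasurableSpace Ω]

lemma measurable_fpFam (hξ : Measurable ξ) (hJ : ∀ ℓ, Measurable (Jv ℓ))
    (hg : ∀ ℓ, Measurable (gv ℓ)) : ∀ i, Measurable (fpFam ξ Jv gv i)
  | .count => hξ
  | .coupling ℓ => hJ ℓ
  | .field ℓ => hg ℓ

variable {μ : Measure Ω}

lemma indepFun_fpFam_summands (hindep : iIndepFun (fpFam ξ Jv gv) μ)
    (hmeas : ∀ i, Measurable (fpFam ξ Jv gv i)) {f : ℝ → ℝ → ℝ}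
    (hf : Measurable (Function.uncurry f)) {ℓ m : ℕ} (hℓm : ℓ ≠ m) :
    IndepFun (fun ω => f (Jv ℓ ω) (gv ℓ ω)) (fun ω => f (Jv m ω) (gv m ω)) μ :=
  hindep.indepFun_of_measurable_iSup hmeas (S := {.coupling ℓ, .field ℓ})
    (T := {.coupling m, .field m}) (by simp [hℓm.symm])
    (measurable_iSup_comap_fpFam (by simp) (by simp) hf)
    (measurable_iSup_comap_fpFam (by simp) (by simp) hf)

lemma indepFun_fpFam_count_sum (hindep : iIndepFun (fpFam ξ Jv gv) μ)
    (hmeas : ∀ i, Measurable (fpFam ξ Jv gv i)) {f : ℝ → ℝ → ℝ}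
    (hf : Measurable (Function.uncurry f)) (k : ℕ) :
    IndepFun ξ (fun ω => ∑ ℓ ∈ Finset.range k, f (Jv ℓ ω) (gv ℓ ω)) μ :=
  hindep.indepFun_of_measurable_iSup hmeas (S := {.count}) (T := {.count}ᶜ)
    disjoint_compl_right
    (Measurable.of_comap_le (le_iSup₂ (f := fun i _ => (FPIdxMS i).comap (fpFam ξ Jv gv i))
      FPIdx.count rfl))
    (Finset.measurable_sum _ fun ℓ _ => measurable_iSup_comap_fpFam (by simp) (by simp) hf)

lemma lintegral_sq_sum_cavityBias_le [IsProbabilityMeasure μ]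
    (hindep : iIndepFun (fpFam ξ Jv gv) μ) (hmeas : ∀ i, Measurable (fpFam ξ Jv gv i))
    (hJsymm : ∀ ℓ, (μ.map (Jv ℓ)).map (fun x => -x) = μ.map (Jv ℓ))
    (hJbdd : ∀ ℓ, ∀ᵐ ω ∂μ, |Jv ℓ ω| ≤ 1) (β : ℝ) (k : ℕ) :
    ∫⁻ ω, ENNReal.ofReal ((∑ ℓ ∈ Finset.range k, cavityBias β (Jv ℓ ω) (gv ℓ ω)) ^ 2) ∂μ ≤ k := by
  have hJ ℓ : Measurable (Jv ℓ) := hmeas (.coupling ℓ)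
  have hg ℓ : Measurable (gv ℓ) := hmeas (.field ℓ)
  simpa using lintegral_sq_sum_le_card (s := Finset.range k) (fun ℓ => by fun_prop)
    (fun ℓ _ => by filter_upwards [hJbdd ℓ] with ω h using (abs_cavityBias_le _ _ _).trans h)
    (fun ℓ _ => integral_eq_zero_of_indepFun_of_odd (hJ ℓ) (hg ℓ)
      (hindep.indepFun (by simp : FPIdx.coupling ℓ ≠ .field ℓ)) (hJsymm ℓ)
      (measurable_cavityBias β) (cavityBias_neg_left β))
    fun ℓ _ m _ hℓm => indepFun_fpFam_summands hindep hmeas (measurable_cavityBias β) hℓm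

end FixedPointFamily

theorem replica_symmetric_fixed_point_second_moment_general
    (β α : ℝ) (hα : 0 ≤ α)
    (ρJ ρg : Measure ℝ)
    (hJsymm : Measure.map (fun x => -x) ρJ = ρJ)
    (hJbdd : ∀ᵐ x ∂ρJ, |x| ≤ 1)
    (Ω : Type) [MeasureSpace Ω] [IsProbabilityMeasure (ℙ : Measure Ω)]
    (ξ : Ω → ℕ) (Jv gv : ℕ → Ω → ℝ)
    (measξ : Measurable ξ)
    (measJ : ∀ ℓ, Measurable (Jv ℓ))
    (measg : ∀ ℓ, Measurable (gv ℓ))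
    (hξ : ∀ k : ℕ, (ℙ : Measure Ω) (ξ ⁻¹' {k})
      = ENNReal.ofReal (Real.exp (-(2 * α)) * (2 * α) ^ k / (Nat.factorial k)))
    (hJ : ∀ ℓ, Measure.map (Jv ℓ) (ℙ : Measure Ω) = ρJ)
    (hindep : iIndepFun (m := FPIdxMS) (fpFam ξ Jv gv) (ℙ : Measure Ω))
    (hfix : Measure.map
        (fun ω => ∑ ℓ ∈ Finset.range (ξ ω),
          β⁻¹ * artanh (Real.tanh (β * Jv ℓ ω) * Real.tanh (β * gv ℓ ω)))
        (ℙ : Measure Ω) = ρg) :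
    ∫⁻ x, ENNReal.ofReal (x ^ 2) ∂ρg ≤ ENNReal.ofReal (2 * α) := by
  have hmeas := measurable_fpFam measξ measJ measg
  have hJbdd' ℓ : ∀ᵐ ω, |Jv ℓ ω| ≤ 1 := ae_of_ae_map (measJ ℓ).aemeasurable (hJ ℓ ▸ hJbdd)
  have hJsymm' ℓ : (Measure.map (Jv ℓ) ℙ).map (fun x => -x) = Measure.map (Jv ℓ) ℙ := by
    rw [hJ ℓ]; exact hJsymm
  have hfix' : Measure.map (fun ω => ∑ ℓ ∈ Finset.range (ξ ω), cavityBias β (Jv ℓ ω) (gv ℓ ω))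
      ℙ = ρg := hfix
  calc ∫⁻ x, ENNReal.ofReal (x ^ 2) ∂ρg
      = ∫⁻ ω, ENNReal.ofReal ((∑ ℓ ∈ Finset.range (ξ ω), cavityBias β (Jv ℓ ω) (gv ℓ ω)) ^ 2) := by
        rw [← hfix', lintegral_map (by fun_prop) (measurable_eval_index measξ
          (Y := fun k ω => ∑ ℓ ∈ Finset.range k, cavityBias β (Jv ℓ ω) (gv ℓ ω)) (by fun_prop))]
    _ = ∑' k, ℙ (ξ ⁻¹' {k}) *
          ∫⁻ ω, ENNReal.ofReal ((∑ ℓ ∈ Finset.range k, cavityBias β (Jv ℓ ω) (gv ℓ ω)) ^ 2) :=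
        lintegral_eval_index_eq_tsum measξ (fun k => by fun_prop) fun k =>
          (indepFun_fpFam_count_sum hindep hmeas (measurable_cavityBias β) k).comp
            measurable_id (measurable_id.pow_const 2).ennreal_ofReal
    _ ≤ ENNReal.ofReal (2 * α) := by
        simp_rw [hξ]
        exact tsum_poisson_mul_le (by positivity)
          (lintegral_sq_sum_cavityBias_le hindep hmeas hJsymm' hJbdd' β)

/-- **Second moment bound for replica symmetric fixed points.**
Let `β > 0`, `α ≥ 0`, let `ρJ` be the law of a symmetric coupling `J` with `|J| ≤ 1`
a.s.  If a symmetric law `ρg` satisfies the distributional fixed-point equation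
`g =_d Σ_{ℓ<ξ_{2α}} (1/β) artanh(tanh(βJ_ℓ) tanh(βg_ℓ))`
(realized on some probability space with `ξ_{2α}` Poisson of mean `2α`,
`(J_ℓ)` i.i.d. with law `ρJ`, `(g_ℓ)` i.i.d. with law `ρg`, all mutually
independent), then `E[g²] ≤ 2α`. -/
theorem replica_symmetric_fixed_point_second_moment
    (β α : ℝ) (hβ : 0 < β) (hα : 0 ≤ α)
    (ρJ ρg : Measure ℝ) [IsProbabilityMeasure ρJ] [IsProbabilityMeasure ρg]
    (hJsymm : Measure.map (fun x => -x) ρJ = ρJ)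
    (hJbdd : ∀ᵐ x ∂ρJ, |x| ≤ 1)
    (hgsymm : Measure.map (fun x => -x) ρg = ρg)
    (Ω : Type) [MeasureSpace Ω] [IsProbabilityMeasure (ℙ : Measure Ω)]
    (ξ : Ω → ℕ) (Jv gv : ℕ → Ω → ℝ)
    (measξ : Measurable ξ)
    (measJ : ∀ ℓ, Measurable (Jv ℓ))
    (measg : ∀ ℓ, Measurable (gv ℓ))
    (hξ : ∀ k : ℕ, (ℙ : Measure Ω) (ξ ⁻¹' {k})
      = ENNReal.ofReal (Real.exp (-(2 * α)) * (2 * α) ^ k / (Nat.factorial k)))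
    (hJ : ∀ ℓ, Measure.map (Jv ℓ) (ℙ : Measure Ω) = ρJ)
    (hg : ∀ ℓ, Measure.map (gv ℓ) (ℙ : Measure Ω) = ρg)
    (hindep : iIndepFun (m := FPIdxMS) (fpFam ξ Jv gv) (ℙ : Measure Ω))
    (hfix : Measure.map
        (fun ω => ∑ ℓ ∈ Finset.range (ξ ω),
          β⁻¹ * artanh (Real.tanh (β * Jv ℓ ω) * Real.tanh (β * gv ℓ ω)))
        (ℙ : Measure Ω) = ρg) :
    ∫⁻ x, ENNReal.ofReal (x ^ 2) ∂ρg ≤ ENNReal.ofReal (2 * α) :=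
  replica_symmetric_fixed_point_second_moment_general β α hα ρJ ρg hJsymm hJbdd Ω ξ Jv gv measξ
    measJ measg hξ hJ hindep hfix
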